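/- For every positive integer n > 1 with r = ω(n) distinct prime factors, (1/2)·σ(n)/n < σ⁺(n)/(n+1) < 2^r · σ(n)/n. -/

import Mathlib

/-- Sum of positive divisors. -/
def sigma (n : ℕ) : ℕ := ∑ d ∈ n.divisors, d

/-- σ⁺(n) = ∏_{p ∣ n} (σ(p^{v_p(n)}) + 1). -/
def sigmaPlus (n : ℕ) : ℕ := ∏ p ∈ n.primeFactors, (sigma (p ^ n.factorization p) + 1)

/-- φ⁺(n) = ∏_{p ∣ n} (φ(p^{v_p(n)}) + 1). -/
def phiPlus (n : ℕ) : ℕ := ∏ p ∈ n.primeFactors, (Nat.totient (p ^ n.factorization p) + 1)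

/-!
Since σ is multiplicative, σ(n) = ∏_{p ∣ n} σ(p^{v_p(n)}) with every factor at least 1.
Adding 1 to each factor strictly increases the product but at most doubles each factor, so
σ(n) < σ⁺(n) ≤ 2^ω(n) σ(n); dividing by n + 1 ∈ (n, 2n] gives both bounds.
-/

lemma sigma_eq_sigma_one (n : ℕ) : sigma n = ArithmeticFunction.sigma 1 n :=
  (ArithmeticFunction.sigma_one_apply n).symm

lemma sigma_pos {n : ℕ} (hn : n ≠ 0) : 0 < sigma n := by
  rw [sigma_eq_sigma_one]
  exact ArithmeticFunction.sigma_pos 1 n hn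

lemma sigma_eq_prod_primeFactors {n : ℕ} (hn : n ≠ 0) :
    sigma n = ∏ p ∈ n.primeFactors, sigma (p ^ n.factorization p) := by
  simp only [sigma_eq_sigma_one]
  exact ArithmeticFunction.isMultiplicative_sigma.multiplicative_factorization _ hn

lemma sigma_lt_sigmaPlus {n : ℕ} (hn : 1 < n) : sigma n < sigmaPlus n := by
  rw [sigma_eq_prod_primeFactors (by omega), sigmaPlus]
  exact Finset.prod_lt_prod_of_nonempty
    (fun p hp => sigma_pos (pow_ne_zero _ (Nat.prime_of_mem_primeFactors hp).ne_zero))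
    (fun _ _ => Nat.lt_succ_self _) (Nat.nonempty_primeFactors.mpr hn)

lemma sigmaPlus_le_two_pow_card_mul_sigma {n : ℕ} (hn : n ≠ 0) :
    sigmaPlus n ≤ 2 ^ n.primeFactors.card * sigma n := by
  rw [sigma_eq_prod_primeFactors hn, sigmaPlus, ← Finset.prod_const, ← Finset.prod_mul_distrib]
  refine Finset.prod_le_prod' fun p hp => ?_
  have := sigma_pos (pow_ne_zero (n.factorization p) (Nat.prime_of_mem_primeFactors hp).ne_zero)
  omega

theorem stmt_7 (n : ℕ) (hn : 1 < n) :
    (1 / 2 : ℚ) * (sigma n : ℚ) / n < (sigmaPlus n : ℚ) / (n + 1) ∧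
    (sigmaPlus n : ℚ) / (n + 1) < 2 ^ n.primeFactors.card * ((sigma n : ℚ) / n) := by
  have hlt : (sigma n : ℚ) < sigmaPlus n := by exact_mod_cast sigma_lt_sigmaPlus hn
  have hle : (sigmaPlus n : ℚ) ≤ 2 ^ n.primeFactors.card * sigma n := by
    exact_mod_cast sigmaPlus_le_two_pow_card_mul_sigma (by omega)
  have hσ : (0 : ℚ) < sigma n := by exact_mod_cast sigma_pos (by omega)
  have hn' : (1 : ℚ) < n := by exact_mod_cast hn
  constructor
  · calc (1 / 2 : ℚ) * sigma n / n = sigma n / (2 * n) := by ring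
      _ < sigmaPlus n / (2 * n) := by gcongr
      _ ≤ sigmaPlus n / (n + 1) := by gcongr; linarith
  · calc (sigmaPlus n : ℚ) / (n + 1) < sigmaPlus n / n := by gcongr <;> linarith
      _ ≤ 2 ^ n.primeFactors.card * sigma n / n := by gcongr
      _ = 2 ^ n.primeFactors.card * (sigma n / n) := by ring
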